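/- Let K be a positive-integer valued random variable with P(K = k) = g_{n₀}(k) = ∫_{k−1}^k φ((a log(n₀+s)+C)/σ̄) ds / ∫_0^∞ φ((a log(n₀+s)+C)/σ̄) ds. Then for every p ≥ 1 and all sufficiently large n₀, E[K^p] ≤ 2 exp(p log n₀ − p σ̄²/a²); in particular log E[K^p] = O(log n₀). -/

import Mathlib

open MeasureTheory

/-- The standard normal density. -/
noncomputable def gaussPDF (t : ℝ) : ℝ := (Real.sqrt (2 * Real.pi))⁻¹ * Real.exp (-t ^ 2 / 2)

open Set Filter

lemma gaussPDF_pos (t : ℝ) : 0 < gaussPDF t := by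
  apply mul_pos (inv_pos.2 (Real.sqrt_pos.2 (by positivity))) (Real.exp_pos _)

lemma gaussPDF_eq_mul (x y : ℝ) : gaussPDF x = gaussPDF y * Real.exp ((y^2 - x^2)/2) := by
  unfold gaussPDF
  rw [mul_assoc, ← Real.exp_add]
  ring_nf

lemma gaussPDF_anti {x y : ℝ} (hx : 0 ≤ x) (hxy : x ≤ y) : gaussPDF y ≤ gaussPDF x := by
  unfold gaussPDF
  gcongr

/-- Closed-form tail integral of `(c+s)^e` for `e < -1`. -/
lemma tailInt (c b e : ℝ) (hc : 0 < c) (hb : 0 ≤ b) (he : e < -1) :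
    IntegrableOn (fun s => (c + s) ^ e) (Ioi b) volume ∧
    ∫ s in Ioi b, (c + s) ^ e = (c + b) ^ (e+1) / (-(e+1)) := by
  have hcb : ∀ x : ℝ, b ≤ x → 0 < c + x := fun x hx => by linarith
  have hderiv : ∀ x ∈ Ioi b, HasDerivAt (fun s => (c + s) ^ (e+1) / (e+1)) ((c + x) ^ e) x := by
    intro x hx
    have h1 : HasDerivAt (fun s : ℝ => c + s) 1 x := (hasDerivAt_id x).const_add c
    have h2 := (Real.hasDerivAt_rpow_const (p := e+1)
      (Or.inl (ne_of_gt (hcb x (le_of_lt hx))))).comp x h1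
    have h3 := h2.div_const (e+1)
    have hne : e + 1 ≠ 0 := by linarith
    refine h3.congr_deriv ?_
    have he1 : e + 1 - 1 = e := by ring
    rw [he1]
    field_simp
  have hcont : ContinuousWithinAt (fun s => (c + s) ^ (e+1) / (e+1)) (Ici b) b := by
    apply ContinuousAt.continuousWithinAt
    have : ContinuousAt (fun s : ℝ => (c + s) ^ (e+1)) b := by
      exact (Real.continuousAt_rpow_const _ _
        (Or.inl (ne_of_gt (hcb b le_rfl)))).comp (by fun_prop)
    exact this.div_const _
  have hnn : ∀ x ∈ Ioi b, (0:ℝ) ≤ (c + x) ^ e := by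
    intro x hx
    exact Real.rpow_nonneg (le_of_lt (hcb x (le_of_lt hx))) _
  have htend : Tendsto (fun s => (c + s) ^ (e+1) / (e+1)) atTop (nhds 0) := by
    have h0 : Tendsto (fun s : ℝ => c + s) atTop atTop := tendsto_atTop_add_const_left _ _ tendsto_id
    have h1 : Tendsto (fun x : ℝ => x ^ (e+1)) atTop (nhds 0) := by
      have := tendsto_rpow_neg_atTop (y := -(e+1)) (by linarith)
      simpa using this
    have := (h1.comp h0).div_const (e+1)
    simpa using this
  refine ⟨integrableOn_Ioi_deriv_of_nonneg hcont hderiv hnn htend, ?_⟩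
  rw [integral_Ioi_of_hasDerivAt_of_nonneg hcont hderiv hnn htend]
  rw [zero_sub, div_neg]



lemma f_contOn (a C σ m : ℝ) (hm : 0 < m) :
    ContinuousOn (fun s => gaussPDF ((a * Real.log (m + s) + C) / σ)) (Ici (0:ℝ)) := by
  have hg : Continuous gaussPDF := by
    unfold gaussPDF
    fun_prop
  apply hg.comp_continuousOn
  apply ContinuousOn.div_const
  apply ContinuousOn.add _ continuousOn_const
  apply ContinuousOn.mul continuousOn_const
  intro x hx
  apply ContinuousAt.continuousWithinAt
  have : m + x ≠ 0 := by simp at hx; positivity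
  exact (Real.continuousAt_log this).comp (by fun_prop)

/-- Upper pointwise bound on the density. -/
lemma f_le (a C σ m : ℝ) (ha : 0 < a) (hσ : 0 < σ) (hm : 1 ≤ m)
    (ht₀ : 0 ≤ a * Real.log m + C) {s : ℝ} (hs : 0 ≤ s) :
    gaussPDF ((a * Real.log (m + s) + C) / σ) ≤
      gaussPDF ((a * Real.log m + C) / σ) *
        (m ^ (a * (a * Real.log m + C) / σ ^ 2) *
          (m + s) ^ (-(a * (a * Real.log m + C) / σ ^ 2))) := by
  set t₀ := a * Real.log m + C with ht₀def
  set q := a * t₀ / σ ^ 2 with hqdef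
  set u := a * Real.log (m + s) + C with hudef
  have hm0 : (0:ℝ) < m := by linarith
  have hms : (0:ℝ) < m + s := by linarith
  have hlog : Real.log m ≤ Real.log (m + s) := Real.log_le_log hm0 (by linarith)
  have hu : t₀ ≤ u := by
    rw [hudef, ht₀def]
    have := mul_le_mul_of_nonneg_left hlog (le_of_lt ha)
    linarith
  rw [gaussPDF_eq_mul (u / σ) (t₀ / σ)]
  gcongr gaussPDF (t₀/σ) * ?_
  · exact le_of_lt (gaussPDF_pos _)
  · rw [Real.rpow_def_of_pos hm0, Real.rpow_def_of_pos hms, ← Real.exp_add, Real.exp_le_exp]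
    have hkey : ((t₀/σ)^2 - (u/σ)^2)/2 ≤ -(t₀/σ^2) * (u - t₀) := by
      rw [div_pow, div_pow, div_sub_div_same, div_div]
      have hσ2 : (0:ℝ) < σ ^ 2 * 2 := by positivity
      have h2 : t₀^2 - u^2 ≤ 2*t₀*(t₀ - u) := by nlinarith [sq_nonneg (u - t₀)]
      calc (t₀^2 - u^2)/(σ^2*2) ≤ (2*t₀*(t₀-u))/(σ^2*2) := by
            exact div_le_div_of_nonneg_right h2 (le_of_lt hσ2)
        _ = -(t₀/σ^2) * (u - t₀) := by field_simp; ring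
    refine le_trans hkey ?_
    have : u - t₀ = a * (Real.log (m+s) - Real.log m) := by rw [hudef, ht₀def]; ring
    rw [this]
    ring_nf
    apply le_of_eq; rw [hqdef]; ring


/-- Lower bound on the density on the initial segment `[0, m/q]`. -/
lemma f_lower (a C σ m : ℝ) (ha : 0 < a) (hσ : 0 < σ) (hm : 1 ≤ m)
    (ht₀ : 1 ≤ a * Real.log m + C) (hq : 1 ≤ a * (a * Real.log m + C) / σ ^ 2)
    {s : ℝ} (hs0 : 0 ≤ s) (hsL : s ≤ m / (a * (a * Real.log m + C) / σ ^ 2)) :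
    gaussPDF ((a * Real.log m + C) / σ) * Real.exp (-(2 * σ ^ 2 + a ^ 2) / (2 * σ ^ 2)) ≤
      gaussPDF ((a * Real.log (m + s) + C) / σ) := by
  set t₀ := a * Real.log m + C with ht₀def
  set q := a * t₀ / σ ^ 2 with hqdef
  set L := m / q with hLdef
  have hm0 : (0:ℝ) < m := by linarith
  have hq0 : (0:ℝ) < q := by linarith
  have hL0 : (0:ℝ) < L := div_pos hm0 hq0
  have hms : (0:ℝ) < m + s := by linarith
  have hmL : (0:ℝ) < m + L := by linarith
  have hlog1 : Real.log m ≤ Real.log (m + s) := Real.log_le_log hm0 (by linarith)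
  have hlog2 : Real.log (m + s) ≤ Real.log (m + L) := Real.log_le_log hms (by linarith)
  set u := a * Real.log (m + s) + C with hudef
  set uL := a * Real.log (m + L) + C with huLdef
  have hu1 : t₀ ≤ u := by
    have := mul_le_mul_of_nonneg_left hlog1 (le_of_lt ha); rw [hudef, ht₀def]; linarith
  have hu2 : u ≤ uL := by
    have := mul_le_mul_of_nonneg_left hlog2 (le_of_lt ha); rw [hudef, huLdef]; linarith
  have step1 : gaussPDF (uL / σ) ≤ gaussPDF (u / σ) := by
    apply gaussPDF_anti
    · apply div_nonneg _ (le_of_lt hσ); linarith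
    · exact div_le_div_of_nonneg_right hu2 (le_of_lt hσ)
  refine le_trans ?_ step1
  clear_value t₀ q L u uL
  have hkey : uL ≤ t₀ + a / q := by
    have h1 : m + L = m * (1 + 1/q) := by
      rw [hLdef]; field_simp
    have h2 : Real.log (1 + 1/q) ≤ 1/q := by
      have := Real.log_le_sub_one_of_pos (x := 1 + 1/q) (by positivity)
      linarith
    have hlogL : Real.log (m + L) ≤ Real.log m + 1 / q := by
      rw [h1, Real.log_mul (ne_of_gt hm0) (by positivity)]
      linarith
    have h4 := mul_le_mul_of_nonneg_left hlogL (le_of_lt ha)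
    have h5 : a * (Real.log m + 1/q) = a * Real.log m + a/q := by ring
    rw [h5] at h4
    rw [huLdef, ht₀def]
    linarith
  have huL0 : 0 ≤ uL := by linarith
  have hsq : uL ^ 2 ≤ t₀ ^ 2 + 2 * σ ^ 2 + a ^ 2 := by
    have h1 : uL ^ 2 ≤ (t₀ + a / q) ^ 2 := pow_le_pow_left₀ huL0 hkey 2
    have h2 : (t₀ + a / q) ^ 2 = t₀ ^ 2 + 2 * (a * t₀ / q) + (a / q) ^ 2 := by ring
    have h3 : a * t₀ / q = σ ^ 2 := by
      rw [hqdef]; field_simp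
    have h4 : (a / q) ^ 2 ≤ a ^ 2 := by
      rw [div_pow]
      have hq2 : 1 ≤ q ^ 2 := by nlinarith
      calc a^2 / q^2 ≤ a^2 / 1 := div_le_div_of_nonneg_left (by positivity) (by norm_num) hq2
        _ = a ^ 2 := by ring
    rw [h2, h3] at h1
    linarith
  rw [gaussPDF_eq_mul (uL / σ) (t₀ / σ)]
  gcongr gaussPDF (t₀/σ) * ?_
  · exact le_of_lt (gaussPDF_pos _)
  · rw [Real.exp_le_exp]
    have heq : ((t₀/σ)^2 - (uL/σ)^2)/2 = (t₀^2 - uL^2)/(2*σ^2) := by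
      rw [div_pow, div_pow, div_sub_div_same, div_div]; ring
    rw [heq]
    exact div_le_div_of_nonneg_right (by linarith) (by positivity)

/-- Core arithmetic estimate for the tail part. -/
lemma coreArith (θ Ecst g₀ m q p : ℝ) (hθ : 0 < θ) (hθ1 : θ ≤ 1) (hg₀ : 0 < g₀) (hE : 0 < Ecst)
    (hm : 1 ≤ m) (h1 : 2 ≤ θ * m) (hq4 : 2 * (p + 1) ≤ q) (hp : 1 ≤ p)
    (h5 : (1 + θ/2) ^ (p + 1 - q) ≤ θ ^ p * Ecst / 2) :
    g₀ * m ^ q * ((m + (θ * m - 1)) ^ (p - q + 1) / (-(p - q + 1))) ≤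
      θ ^ p * m ^ p * (m / q * (g₀ * Ecst)) := by
  have hm0 : (0:ℝ) < m := by linarith
  have hq0 : (0:ℝ) < q := by linarith
  have hd0 : (0:ℝ) < q - p - 1 := by linarith
  have hqp : q / 2 ≤ q - p - 1 := by linarith
  rw [show -(p - q + 1) = q - p - 1 by ring]
  rw [show p + 1 - q = p - q + 1 by ring] at h5
  set ρ := 1 + θ - 1/m with hρ
  have h1m : 1/m ≤ θ/2 := by
    rw [div_le_iff₀ hm0]; nlinarith
  have hρpos : (0:ℝ) < ρ := by
    have : 1/m ≤ 1 := by rw [div_le_one hm0]; linarith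
    rw [hρ]; linarith
  have hρge : 1 + θ/2 ≤ ρ := by rw [hρ]; linarith
  have hρdef : m + (θ * m - 1) = m * ρ := by
    rw [hρ]; field_simp; ring
  rw [hρdef]
  have hsplit : (m * ρ) ^ (p - q + 1) = m ^ (p - q + 1) * ρ ^ (p - q + 1) :=
    Real.mul_rpow hm0.le hρpos.le
  have hmq : m ^ q * m ^ (p - q + 1) = m ^ p * m := by
    rw [← Real.rpow_add hm0, ← Real.rpow_add_one (ne_of_gt hm0) p]
    congr 1; ring
  have hρle : ρ ^ (p - q + 1) ≤ (1 + θ/2) ^ (p - q + 1) :=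
    Real.rpow_le_rpow_of_nonpos (by positivity) hρge (by linarith)
  have hfrac : ρ ^ (p - q + 1) / (q - p - 1) ≤ (1 + θ/2) ^ (p - q + 1) * (2/q) := by
    have ha' : ρ ^ (p - q + 1) / (q - p - 1) ≤ (1 + θ/2) ^ (p - q + 1) / (q - p - 1) :=
      div_le_div_of_nonneg_right hρle hd0.le
    have hb' : (1 + θ/2) ^ (p - q + 1) / (q - p - 1) ≤ (1 + θ/2) ^ (p - q + 1) / (q/2) :=
      div_le_div_of_nonneg_left (Real.rpow_nonneg (by positivity) _) (by linarith) hqp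
    have hc' : (1 + θ/2) ^ (p - q + 1) / (q/2) = (1 + θ/2) ^ (p - q + 1) * (2/q) := by
      field_simp
    linarith
  calc g₀ * m ^ q * ((m * ρ) ^ (p - q + 1) / (q - p - 1))
      = g₀ * (m ^ q * m ^ (p - q + 1)) * (ρ ^ (p - q + 1) / (q - p - 1)) := by
        rw [hsplit]; ring
    _ = g₀ * (m ^ p * m) * (ρ ^ (p - q + 1) / (q - p - 1)) := by rw [hmq]
    _ ≤ g₀ * (m ^ p * m) * ((1 + θ/2) ^ (p - q + 1) * (2/q)) := by
        apply mul_le_mul_of_nonneg_left hfrac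
        positivity
    _ ≤ g₀ * (m ^ p * m) * ((θ ^ p * Ecst / 2) * (2/q)) := by
        apply mul_le_mul_of_nonneg_left _ (by positivity)
        apply mul_le_mul_of_nonneg_right h5 (by positivity)
    _ = θ ^ p * m ^ p * (m / q * (g₀ * Ecst)) := by
        field_simp

/-- Moment bound for a random variable `K` with probability mass function `g_{n₀}`:
for every `p ≥ 1` and all sufficiently large `n₀`,
`E[K^p] ≤ 2 exp(p log n₀ − p σ̄²/a²)`. -/
theorem stmt9 (a C σ : ℝ) (ha : 0 < a) (ha1 : a ≤ 1) (hσ : 0 < σ)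
    (p : ℝ) (hp : 1 ≤ p) :
    ∃ n₁ : ℕ, ∀ n₀ : ℕ, n₁ ≤ n₀ →
      ∑' k : ℕ, (k : ℝ) ^ p *
          ((∫ s in Set.Ioc ((k : ℝ) - 1) (k : ℝ),
              gaussPDF ((a * Real.log ((n₀ : ℝ) + s) + C) / σ))
            / ∫ s in Set.Ioi (0 : ℝ), gaussPDF ((a * Real.log ((n₀ : ℝ) + s) + C) / σ))
        ≤ 2 * Real.exp (p * Real.log n₀ - p * σ ^ 2 / a ^ 2) := by
  classical
  set θ := Real.exp (-(σ^2/a^2)) with hθdef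
  have hθpos : 0 < θ := Real.exp_pos _
  have hθ1 : θ ≤ 1 := by
    rw [hθdef, Real.exp_le_one_iff]
    have : 0 ≤ σ^2/a^2 := by positivity
    linarith
  set Ecst := Real.exp (-(2*σ^2+a^2)/(2*σ^2)) with hEdef
  have hEpos : 0 < Ecst := Real.exp_pos _
  have hp0 : (0:ℝ) ≤ p := by linarith
  have hpne : p ≠ 0 := by linarith
  -- eventual conditions
  have htend_t : Filter.Tendsto (fun n : ℕ => a * Real.log n + C) Filter.atTop Filter.atTop := by
    apply Filter.tendsto_atTop_add_const_right
    exact (Real.tendsto_log_atTop.comp tendsto_natCast_atTop_atTop).const_mul_atTop ha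
  have htend_q : Filter.Tendsto (fun n : ℕ => a * (a * Real.log n + C) / σ^2)
      Filter.atTop Filter.atTop :=
    (htend_t.const_mul_atTop ha).atTop_div_const (by positivity)
  have e1 : ∀ᶠ n : ℕ in Filter.atTop, (2:ℝ) ≤ θ * n :=
    (tendsto_natCast_atTop_atTop.const_mul_atTop hθpos).eventually_ge_atTop 2
  have e2 := htend_t.eventually_ge_atTop 1
  have e3 := htend_q.eventually_ge_atTop (p+2)
  have e4 := htend_q.eventually_ge_atTop (2*(p+1))
  have e5 : ∀ᶠ n : ℕ in Filter.atTop,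
      (1+θ/2) ^ (p + 1 - a * (a * Real.log n + C) / σ^2) ≤ θ^p * Ecst / 2 := by
    have hb1 : (0:ℝ) < Real.log (1+θ/2) := Real.log_pos (by linarith)
    have h0 : Filter.Tendsto
        (fun n : ℕ => Real.log (1+θ/2) * (p + 1 - a * (a * Real.log n + C) / σ^2))
        Filter.atTop Filter.atBot := by
      apply Filter.Tendsto.const_mul_atBot hb1
      have := Filter.tendsto_atBot_add_const_left Filter.atTop (p+1)
        (tendsto_neg_atTop_atBot.comp htend_q)
      simpa [sub_eq_add_neg] using this
    have h1' : Filter.Tendsto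
        (fun n : ℕ => (1+θ/2) ^ (p + 1 - a * (a * Real.log n + C) / σ^2))
        Filter.atTop (nhds 0) := by
      have heq : ∀ n : ℕ, (1+θ/2) ^ (p + 1 - a * (a * Real.log n + C) / σ^2)
          = Real.exp (Real.log (1+θ/2) * (p + 1 - a * (a * Real.log n + C) / σ^2)) :=
        fun n => Real.rpow_def_of_pos (by linarith) _
      simp only [heq]
      exact Real.tendsto_exp_atBot.comp h0
    exact h1'.eventually_le_const (by positivity)
  obtain ⟨n₁, hn₁⟩ := Filter.eventually_atTop.1 (e1.and (e2.and (e3.and (e4.and e5))))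
  refine ⟨n₁, fun n₀ hn₀ => ?_⟩
  obtain ⟨h1, h2, h3, h4, h5⟩ := hn₁ n₀ hn₀
  set m := (n₀ : ℝ) with hmdef
  have hm0' : (0:ℝ) ≤ m := Nat.cast_nonneg n₀
  have hm1 : (1:ℝ) ≤ m := by nlinarith
  have hm0 : (0:ℝ) < m := by linarith
  set f : ℝ → ℝ := fun s => gaussPDF ((a * Real.log (m + s) + C) / σ) with hfdef
  set t₀ := a * Real.log m + C with ht₀def
  set q := a * t₀ / σ^2 with hqdef
  set g₀ := gaussPDF (t₀ / σ) with hg₀def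
  -- h2 : 1 ≤ t₀, h3 : p + 2 ≤ q, h4 : 2*(p+1) ≤ q, h5 : (1+θ/2)^(p+1-q) ≤ θ^p*Ecst/2
  have hq0 : (0:ℝ) < q := by linarith
  have hg₀pos : 0 < g₀ := gaussPDF_pos _
  have hfc : ContinuousOn f (Set.Ici (0:ℝ)) := f_contOn a C σ m hm0
  have hfpos : ∀ s : ℝ, 0 < f s := fun s => gaussPDF_pos _
  have hfub : ∀ s : ℝ, 0 ≤ s → f s ≤ g₀ * m^q * (m+s)^(-q) := by
    intro s hs
    have h := f_le a C σ m ha hσ hm1 (by rw [← ht₀def]; linarith) hs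
    rw [← ht₀def, ← hqdef, ← hg₀def, ← mul_assoc] at h
    exact h
  have hhub : ∀ s : ℝ, 0 ≤ s → (s+1)^p * f s ≤ g₀ * m^q * (m+s)^(p-q) := by
    intro s hs
    have hms : (0:ℝ) < m + s := by linarith
    have hb1 : (s+1)^p ≤ (m+s)^p := Real.rpow_le_rpow (by linarith) (by linarith) hp0
    calc (s+1)^p * f s ≤ (m+s)^p * (g₀ * m^q * (m+s)^(-q)) :=
          mul_le_mul hb1 (hfub s hs) (le_of_lt (hfpos s)) (Real.rpow_nonneg hms.le p)
      _ = (g₀ * m^q) * ((m+s)^p * (m+s)^(-q)) := by ring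
      _ = g₀ * m^q * (m+s)^(p-q) := by
          rw [show p - q = p + -q from by ring, Real.rpow_add hms]
  have hWint : ∀ b e : ℝ, 0 ≤ b → e < -1 →
      IntegrableOn (fun s => (m+s)^e) (Set.Ioi b) volume :=
    fun b e hb he => (tailInt m b e hm0 hb he).1
  have hfint : IntegrableOn f (Set.Ioi (0:ℝ)) volume := by
    apply Integrable.mono' (((hWint 0 (-q) le_rfl (by linarith)).const_mul (g₀ * m^q)))
    · exact (hfc.mono Set.Ioi_subset_Ici_self).aestronglyMeasurable measurableSet_Ioi
    · rw [MeasureTheory.ae_restrict_iff' measurableSet_Ioi]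
      apply Filter.Eventually.of_forall
      intro s hs
      rw [Real.norm_eq_abs, abs_of_pos (hfpos s)]
      exact hfub s (le_of_lt hs)
  have hhcont : ContinuousOn (fun s : ℝ => (s+1)^p * f s) (Set.Ici (0:ℝ)) := by
    apply ContinuousOn.mul _ hfc
    apply ContinuousOn.rpow_const (by fun_prop)
    intro x hx
    exact Or.inr hp0
  have hhint : IntegrableOn (fun s : ℝ => (s+1)^p * f s) (Set.Ioi (0:ℝ)) volume := by
    apply Integrable.mono' ((hWint 0 (p-q) le_rfl (by linarith)).const_mul (g₀ * m^q))
    · exact (hhcont.mono Set.Ioi_subset_Ici_self).aestronglyMeasurable measurableSet_Ioi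
    · rw [MeasureTheory.ae_restrict_iff' measurableSet_Ioi]
      apply Filter.Eventually.of_forall
      intro s hs
      rw [Real.norm_eq_abs, abs_of_nonneg
        (mul_nonneg (Real.rpow_nonneg (by linarith [le_of_lt (show (0:ℝ) < s from hs)]) p)
          (le_of_lt (hfpos s)))]
      exact hhub s (le_of_lt hs)
  set D := ∫ s in Set.Ioi (0:ℝ), f s with hDdef
  set N := ∫ s in Set.Ioi (0:ℝ), (s+1)^p * f s with hNdef
  -- lower bound for D
  have hL0 : (0:ℝ) < m / q := div_pos hm0 hq0
  have hD_lb : (m/q) * (g₀ * Ecst) ≤ D := by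
    have hsub : Set.Ioc (0:ℝ) (m/q) ⊆ Set.Ioi 0 := Set.Ioc_subset_Ioi_self
    have hconst : ∫ _s in Set.Ioc (0:ℝ) (m/q), (g₀ * Ecst) = (m/q) * (g₀ * Ecst) := by
      rw [MeasureTheory.setIntegral_const, Real.volume_real_Ioc, sub_zero,
        max_eq_left (le_of_lt hL0), smul_eq_mul]
    have step1 : ∫ _s in Set.Ioc (0:ℝ) (m/q), (g₀ * Ecst) ≤ ∫ s in Set.Ioc (0:ℝ) (m/q), f s := by
      apply setIntegral_mono_on
      · exact integrableOn_const measure_Ioc_lt_top.ne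
      · exact hfint.mono_set hsub
      · exact measurableSet_Ioc
      · intro x hx
        have h := f_lower a C σ m ha hσ hm1 (by rw [← ht₀def]; linarith)
          (by rw [← ht₀def, ← hqdef]; linarith) (le_of_lt hx.1)
          (by rw [← ht₀def, ← hqdef]; exact hx.2)
        rw [← ht₀def, ← hg₀def, ← hEdef] at h
        exact h
    have step2 : ∫ s in Set.Ioc (0:ℝ) (m/q), f s ≤ D := by
      apply setIntegral_mono_set hfint
      · rw [Filter.EventuallyLE]
        rw [MeasureTheory.ae_restrict_iff' measurableSet_Ioi]
        exact Filter.Eventually.of_forall fun s _ => le_of_lt (hfpos s)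
      · exact hsub.eventuallyLE
    rw [← hconst]
    exact le_trans step1 step2
  have hD_pos : 0 < D := lt_of_lt_of_le (by positivity) hD_lb
  -- partial sums bounded by N
  have key : ∀ n : ℕ, (∑ k ∈ Finset.range (n+1), (k:ℝ)^p * ∫ s in Set.Ioc ((k:ℝ)-1) (k:ℝ), f s)
      ≤ ∫ s in Set.Ioc (0:ℝ) (n:ℝ), (s+1)^p * f s := by
    intro n
    induction n with
    | zero => simp [Real.zero_rpow hpne]
    | succ n ih =>
      have hsub1 : Set.Ioc ((n:ℝ)) ((n:ℝ)+1) ⊆ Set.Ioi 0 :=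
        fun x hx => lt_of_le_of_lt (Nat.cast_nonneg n) hx.1
      have hsub0 : Set.Ioc (0:ℝ) ((n:ℝ)) ⊆ Set.Ioi 0 := Set.Ioc_subset_Ioi_self
      have hc : ((n+1:ℕ):ℝ) = (n:ℝ)+1 := by push_cast; ring
      rw [Finset.sum_range_succ, hc]
      have tb : ((n:ℝ)+1)^p * (∫ s in Set.Ioc ((n:ℝ)+1-1) ((n:ℝ)+1), f s)
          ≤ ∫ s in Set.Ioc ((n:ℝ)) ((n:ℝ)+1), (s+1)^p * f s := by
        rw [show (n:ℝ)+1-1 = (n:ℝ) from by ring, ← MeasureTheory.integral_const_mul]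
        apply setIntegral_mono_on ((hfint.mono_set hsub1).const_mul _)
          (hhint.mono_set hsub1) measurableSet_Ioc
        intro x hx
        have hx1 : ((n:ℝ)+1)^p ≤ (x+1)^p :=
          Real.rpow_le_rpow (by positivity) (by linarith [hx.1]) hp0
        exact mul_le_mul_of_nonneg_right hx1 (le_of_lt (hfpos x))
      have hun : (∫ s in Set.Ioc (0:ℝ) ((n:ℝ)+1), (s+1)^p * f s)
          = (∫ s in Set.Ioc (0:ℝ) ((n:ℝ)), (s+1)^p * f s)
            + ∫ s in Set.Ioc ((n:ℝ)) ((n:ℝ)+1), (s+1)^p * f s := by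
        rw [← Set.Ioc_union_Ioc_eq_Ioc (Nat.cast_nonneg n : (0:ℝ) ≤ (n:ℝ))
          (by linarith : (n:ℝ) ≤ (n:ℝ)+1)]
        exact setIntegral_union (Set.Ioc_disjoint_Ioc_of_le le_rfl) measurableSet_Ioc
          (hhint.mono_set hsub0) (hhint.mono_set hsub1)
      rw [hun]
      exact add_le_add ih tb
  have hNnn : (0:ℝ) ≤ N :=
    setIntegral_nonneg measurableSet_Ioi fun x hx =>
      mul_nonneg (Real.rpow_nonneg (by linarith [Set.mem_Ioi.1 hx]) p) (le_of_lt (hfpos x))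
  have key2 : ∀ n : ℕ, (∑ k ∈ Finset.range n, (k:ℝ)^p * ∫ s in Set.Ioc ((k:ℝ)-1) (k:ℝ), f s) ≤ N := by
    intro n
    match n with
    | 0 => simpa using hNnn
    | Nat.succ n =>
      refine le_trans (key n) ?_
      apply setIntegral_mono_set hhint
      · rw [Filter.EventuallyLE, MeasureTheory.ae_restrict_iff' measurableSet_Ioi]
        exact Filter.Eventually.of_forall fun s hs =>
          mul_nonneg (Real.rpow_nonneg (by linarith [Set.mem_Ioi.1 hs]) p) (le_of_lt (hfpos s))
      · exact (Set.Ioc_subset_Ioi_self : Set.Ioc (0:ℝ) (n:ℝ) ⊆ _).eventuallyLE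
  have tnn : ∀ k : ℕ, 0 ≤ (k:ℝ)^p * ((∫ s in Set.Ioc ((k:ℝ)-1) (k:ℝ), f s) / D) := by
    intro k
    apply mul_nonneg (Real.rpow_nonneg (Nat.cast_nonneg k) p)
    apply div_nonneg _ (le_of_lt hD_pos)
    exact setIntegral_nonneg measurableSet_Ioc fun x _ => le_of_lt (hfpos x)
  have sumle : ∀ u : Finset ℕ,
      (∑ k ∈ u, (k:ℝ)^p * ((∫ s in Set.Ioc ((k:ℝ)-1) (k:ℝ), f s) / D)) ≤ N / D := by
    intro u
    obtain ⟨n, hun⟩ := u.exists_nat_subset_range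
    calc (∑ k ∈ u, (k:ℝ)^p * ((∫ s in Set.Ioc ((k:ℝ)-1) (k:ℝ), f s) / D))
        ≤ ∑ k ∈ Finset.range n, (k:ℝ)^p * ((∫ s in Set.Ioc ((k:ℝ)-1) (k:ℝ), f s) / D) :=
          Finset.sum_le_sum_of_subset_of_nonneg hun fun k _ _ => tnn k
      _ = (∑ k ∈ Finset.range n, (k:ℝ)^p * ∫ s in Set.Ioc ((k:ℝ)-1) (k:ℝ), f s) / D := by
          rw [Finset.sum_div]
          exact Finset.sum_congr rfl fun k _ => (mul_div_assoc _ _ _).symm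
      _ ≤ N / D := div_le_div_of_nonneg_right (key2 n) (le_of_lt hD_pos)
  have hsummable : Summable (fun k : ℕ =>
      (k:ℝ)^p * ((∫ s in Set.Ioc ((k:ℝ)-1) (k:ℝ), f s) / D)) :=
    summable_of_sum_le (fun k => tnn k) sumle
  have hts := Summable.tsum_le_of_sum_le hsummable sumle
  -- upper bound for N
  set A := θ * m - 1 with hAdef
  have hA0 : (0:ℝ) ≤ A := by rw [hAdef]; linarith
  have hsubA : Set.Ioi A ⊆ Set.Ioi (0:ℝ) := Set.Ioi_subset_Ioi hA0
  have hsplitN : N = (∫ s in Set.Ioc (0:ℝ) A, (s+1)^p * f s)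
      + ∫ s in Set.Ioi A, (s+1)^p * f s := by
    rw [hNdef, ← Set.Ioc_union_Ioi_eq_Ioi hA0]
    exact setIntegral_union (Set.Ioc_disjoint_Ioi le_rfl) measurableSet_Ioi
      (hhint.mono_set Set.Ioc_subset_Ioi_self) (hhint.mono_set hsubA)
  have hP1 : (∫ s in Set.Ioc (0:ℝ) A, (s+1)^p * f s) ≤ θ^p * m^p * D := by
    have s1 : (∫ s in Set.Ioc (0:ℝ) A, (s+1)^p * f s)
        ≤ ∫ s in Set.Ioc (0:ℝ) A, (θ*m)^p * f s := by
      apply setIntegral_mono_on (hhint.mono_set Set.Ioc_subset_Ioi_self)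
        ((hfint.mono_set Set.Ioc_subset_Ioi_self).const_mul _) measurableSet_Ioc
      intro x hx
      have hx1 : (x+1)^p ≤ (θ*m)^p := by
        apply Real.rpow_le_rpow (by linarith [hx.1]) _ hp0
        have := hx.2
        rw [hAdef] at this
        linarith
      exact mul_le_mul_of_nonneg_right hx1 (le_of_lt (hfpos x))
    have s3 : (∫ s in Set.Ioc (0:ℝ) A, f s) ≤ D := by
      apply setIntegral_mono_set hfint
      · rw [Filter.EventuallyLE, MeasureTheory.ae_restrict_iff' measurableSet_Ioi]
        exact Filter.Eventually.of_forall fun s _ => le_of_lt (hfpos s)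
      · exact (Set.Ioc_subset_Ioi_self : Set.Ioc (0:ℝ) A ⊆ _).eventuallyLE
    calc (∫ s in Set.Ioc (0:ℝ) A, (s+1)^p * f s)
        ≤ ∫ s in Set.Ioc (0:ℝ) A, (θ*m)^p * f s := s1
      _ = (θ*m)^p * ∫ s in Set.Ioc (0:ℝ) A, f s := MeasureTheory.integral_const_mul _ _
      _ ≤ (θ*m)^p * D := mul_le_mul_of_nonneg_left s3 (Real.rpow_nonneg (by positivity) p)
      _ = θ^p * m^p * D := by rw [Real.mul_rpow (le_of_lt hθpos) hm0']
  have hP2 : (∫ s in Set.Ioi A, (s+1)^p * f s) ≤ θ^p * m^p * D := by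
    have s1 : (∫ s in Set.Ioi A, (s+1)^p * f s)
        ≤ ∫ s in Set.Ioi A, (g₀ * m^q) * (m+s)^(p-q) := by
      apply setIntegral_mono_on (hhint.mono_set hsubA)
        ((hWint A (p-q) hA0 (by linarith)).const_mul _) measurableSet_Ioi
      intro x hx
      have := hhub x (le_of_lt (hsubA hx))
      rw [mul_assoc] at this ⊢
      exact this
    have s2 : (∫ s in Set.Ioi A, (g₀ * m^q) * (m+s)^(p-q))
        = (g₀ * m^q) * ((m+A)^(p-q+1)/(-(p-q+1))) := by
      rw [MeasureTheory.integral_const_mul, (tailInt m A (p-q) hm0 hA0 (by linarith)).2]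
    have s3 := coreArith θ Ecst g₀ m q p hθpos hθ1 hg₀pos hEpos hm1 h1 h4 hp h5
    rw [← hAdef] at s3
    have s4 : θ^p * m^p * (m/q*(g₀*Ecst)) ≤ θ^p * m^p * D :=
      mul_le_mul_of_nonneg_left hD_lb (by positivity)
    calc (∫ s in Set.Ioi A, (s+1)^p * f s)
        ≤ ∫ s in Set.Ioi A, (g₀ * m^q) * (m+s)^(p-q) := s1
      _ = (g₀ * m^q) * ((m+A)^(p-q+1)/(-(p-q+1))) := s2
      _ = g₀ * m^q * ((m+A)^(p-q+1)/(-(p-q+1))) := by ring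
      _ ≤ θ^p * m^p * (m/q*(g₀*Ecst)) := s3
      _ ≤ θ^p * m^p * D := s4
  have hNle : N ≤ 2 * (θ^p * m^p) * D := by
    have h2d : 2 * (θ^p * m^p) * D = θ^p * m^p * D + θ^p * m^p * D := by ring
    rw [hsplitN, h2d]
    exact add_le_add hP1 hP2
  have hfinal : N / D ≤ 2 * (θ^p * m^p) := (div_le_iff₀ hD_pos).2 hNle
  have hrhs : 2 * (θ^p * m^p) = 2 * Real.exp (p * Real.log m - p * σ^2/a^2) := by
    rw [hθdef, ← Real.exp_mul, Real.rpow_def_of_pos hm0, ← Real.exp_add]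
    congr 2
    ring
  exact le_trans hts (le_of_le_of_eq hfinal hrhs)
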